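/- arXiv:2012.13798 — 3 statements merged into one kernel-verified Lean document; each statement's English description precedes it below -/
import Mathlib

section
/- There exists a naive staged tree classifier representing the 2-XOR rule: there is a strictly positive distribution P on {0,1}³ of the form P(c, x_1, x_2) = P(c)·P(x_1|c)·P(x_2|c, x_1) in which, for each depth, the conditional distributions take at most two distinct values (at depth of X₂ the stages are {(c,x_1) : c ⊕ x_1 = 0} and {(c,x_1) : c ⊕ x_1 = 1}), and for every (x_1, x_2), P(C = x_1⊕x_2 | x_1, x_2) > P(C = 1−(x_1⊕x_2) | x_1, x_2). -/
open Finset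

/-- There exists a naive staged tree classifier representing the 2-XOR rule:
a strictly positive chain-rule factorized distribution
`P(c,x₁,x₂) = pc(c)·p₁(x₁|c)·p₂(x₂|c,x₁)` in which the depth-2 conditionals
depend only on `c ⊕ x₁` (two stages: `{(c,x₁) : c ⊕ x₁ = 0}` and
`{(c,x₁) : c ⊕ x₁ = 1}`), and whose MAP classifier equals XOR everywhere. -/
theorem naive_staged_tree_represents_xor :
    ∃ (pc : Bool → ℝ) (p1 : Bool → Bool → ℝ) (p2 : Bool → Bool → Bool → ℝ)
      (g : Bool → Bool → ℝ),
      (∀ c, 0 < pc c) ∧ (∑ c, pc c = 1) ∧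
      (∀ c x1, 0 < p1 c x1) ∧ (∀ c, ∑ x1, p1 c x1 = 1) ∧
      (∀ c x1 x2, 0 < p2 c x1 x2) ∧ (∀ c x1, ∑ x2, p2 c x1 x2 = 1) ∧
      -- staging at depth 2: the conditional of X₂ depends only on c ⊕ x₁
      (∀ c x1 x2, p2 c x1 x2 = g (xor c x1) x2) ∧
      (∀ x1 x2 : Bool,
        (pc (xor x1 x2) * p1 (xor x1 x2) x1 * p2 (xor x1 x2) x1 x2) /
            (∑ c, pc c * p1 c x1 * p2 c x1 x2) >
        (pc (!(xor x1 x2)) * p1 (!(xor x1 x2)) x1 * p2 (!(xor x1 x2)) x1 x2) /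
            (∑ c, pc c * p1 c x1 * p2 c x1 x2)) := by
  refine ⟨fun _ => 1/2, fun _ _ => 1/2,
    fun c x1 x2 => if xor c x1 = x2 then 3/4 else 1/4,
    fun b x2 => if b = x2 then 3/4 else 1/4, ?_, ?_, ?_, ?_, ?_, ?_, ?_, ?_⟩ <;>
    first
    | norm_num
    | (intro c; fin_cases c <;> simp <;> norm_num)
    | (intro c x1; fin_cases c <;> fin_cases x1 <;> simp <;> norm_num)
    | (intro c x1 x2; fin_cases c <;> fin_cases x1 <;> fin_cases x2 <;> simp <;> norm_num)
end

section
/- Atomic probabilities of a staged tree model determine the stage parameters: if y, y′ ∈ Θ_T give the same atomic probabilities, i.e., ∏_{i=1}^p y_{θ(x_1,…,x_i)} = ∏_{i=1}^p y′_{θ(x_1,…,x_i)} for all x ∈ 𝕏, and additionally each stage contains a vertex reachable with positive prefix probability (which holds automatically since all parameters are in (0,1)), then y = y′. -/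
/-!
Write `P_k(x)` for the probability of the depth-`k` prefix of `x`, the product of the first `k`
edge parameters along its path. Since the edge parameters at each stage sum to one, summing
`P_{k+1}` over the `k`-th coordinate gives back `P_k`; so equality of the atomic probabilities
`P_p` propagates down to every `P_k`. Then `y_{θ(x_1,…,x_{k+1})} = P_{k+1}(x) / P_k(x)` is
determined by the atomic probabilities, the prefix probability being positive.
-/

open Finset

namespace StagedTree

variable {p : ℕ} {X : Fin p → Type} {S : Type}

/-- `σ i x` is the stage of the depth-`i` vertex on the root-to-leaf path `x`, so it may depend
only on the coordinates `x j` with `j < i`. -/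
def IsAdapted (σ : (i : Fin p) → (∀ j, X j) → S) : Prop :=
  ∀ (i : Fin p) (x x' : ∀ j, X j), (∀ j : Fin p, j < i → x j = x' j) → σ i x = σ i x'

def prefixProb (z : (i : Fin p) → S → X i → ℝ) (σ : (i : Fin p) → (∀ j, X j) → S) (k : ℕ)
    (x : ∀ j, X j) : ℝ :=
  ∏ j ∈ univ.filter (fun j : Fin p => (j : ℕ) < k), z j (σ j x) (x j)

variable {z : (i : Fin p) → S → X i → ℝ} {σ : (i : Fin p) → (∀ j, X j) → S}

theorem prefixProb_full (x : ∀ j, X j) : prefixProb z σ p x = ∏ i, z i (σ i x) (x i) := by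
  simp [prefixProb]

theorem prefixProb_succ (i : Fin p) (x : ∀ j, X j) :
    prefixProb z σ (i + 1) x = z i (σ i x) (x i) * prefixProb z σ i x := by
  have hfilter : univ.filter (fun j : Fin p => (j : ℕ) < i + 1)
      = insert i (univ.filter (fun j : Fin p => (j : ℕ) < i)) := by
    ext j
    simp only [mem_filter, mem_univ, true_and, mem_insert, Fin.ext_iff]
    omega
  rw [prefixProb, hfilter, prod_insert (by simp)]
  rfl

theorem prefixProb_pos (hz : ∀ (i : Fin p) (x : ∀ j, X j) (a : X i), 0 < z i (σ i x) a)
    (k : ℕ) (x : ∀ j, X j) : 0 < prefixProb z σ k x :=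
  prod_pos fun j _ => hz j x (x j)

theorem IsAdapted.apply_update_of_le (hσ : IsAdapted σ) {i j : Fin p}
    (hji : j ≤ i) (x : ∀ j, X j) (a : X i) : σ j (Function.update x i a) = σ j x :=
  hσ j _ _ fun _ hlt => Function.update_of_ne (hlt.trans_le hji).ne a x

theorem IsAdapted.prefixProb_update (hσ : IsAdapted σ) (i : Fin p)
    (x : ∀ j, X j) (a : X i) : prefixProb z σ i (Function.update x i a) = prefixProb z σ i x :=
  prod_congr rfl fun j hj => by
    have hji : j < i := (mem_filter.mp hj).2
    rw [hσ.apply_update_of_le hji.le, Function.update_of_ne hji.ne]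

theorem IsAdapted.sum_prefixProb_succ_update [∀ i, Fintype (X i)]
    (hσ : IsAdapted σ) (hsum : ∀ (i : Fin p) (x : ∀ j, X j), ∑ a : X i, z i (σ i x) a = 1)
    (i : Fin p) (x : ∀ j, X j) :
    ∑ a : X i, prefixProb z σ (i + 1) (Function.update x i a) = prefixProb z σ i x := by
  have hterm (a : X i) : prefixProb z σ (i + 1) (Function.update x i a)
      = z i (σ i x) a * prefixProb z σ i x := by
    rw [prefixProb_succ, hσ.prefixProb_update, hσ.apply_update_of_le le_rfl, Function.update_self]
  rw [sum_congr rfl fun a _ => hterm a, ← sum_mul, hsum, one_mul]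

theorem IsAdapted.prefixProb_eq_of_prod_eq [∀ i, Fintype (X i)] (hσ : IsAdapted σ)
    {y y' : (i : Fin p) → S → X i → ℝ}
    (hsum : ∀ (i : Fin p) (x : ∀ j, X j), ∑ a : X i, y i (σ i x) a = 1)
    (hsum' : ∀ (i : Fin p) (x : ∀ j, X j), ∑ a : X i, y' i (σ i x) a = 1)
    (heq : ∀ x : ∀ j, X j, ∏ i, y i (σ i x) (x i) = ∏ i, y' i (σ i x) (x i))
    {k : ℕ} (hk : k ≤ p) (x : ∀ j, X j) : prefixProb y σ k x = prefixProb y' σ k x := by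
  refine Nat.decreasingInduction
    (motive := fun k _ => ∀ x, prefixProb y σ k x = prefixProb y' σ k x)
    (fun k hk ih x => ?_) (fun x => by rw [prefixProb_full, prefixProb_full, heq]) hk x
  rw [← hσ.sum_prefixProb_succ_update hsum ⟨k, hk⟩,
    ← hσ.sum_prefixProb_succ_update hsum' ⟨k, hk⟩]
  exact sum_congr rfl fun a _ => ih _

end StagedTree

theorem staged_tree_parameters_identifiable_general
    (p : ℕ) (X : Fin p → Type) [∀ i, Fintype (X i)]
    (S : Type)
    (σ : (i : Fin p) → (∀ j, X j) → S)
    (hσ : ∀ (i : Fin p) (x x' : ∀ j, X j),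
      (∀ j : Fin p, j < i → x j = x' j) → σ i x = σ i x')
    (y y' : (i : Fin p) → S → X i → ℝ)
    (hy' : ∀ (i : Fin p) (x : ∀ j, X j) (a : X i), y' i (σ i x) a ∈ Set.Ioo (0:ℝ) 1)
    (hsum : ∀ (i : Fin p) (x : ∀ j, X j), ∑ a : X i, y i (σ i x) a = 1)
    (hsum' : ∀ (i : Fin p) (x : ∀ j, X j), ∑ a : X i, y' i (σ i x) a = 1)
    (heq : ∀ x : ∀ j, X j,
      ∏ i : Fin p, y i (σ i x) (x i) = ∏ i : Fin p, y' i (σ i x) (x i)) :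
    ∀ (i : Fin p) (x : ∀ j, X j) (a : X i), y i (σ i x) a = y' i (σ i x) a := by
  intro i x a
  have hadapted : StagedTree.IsAdapted σ := hσ
  have hprefix {k : ℕ} (hk : k ≤ p) : StagedTree.prefixProb y σ k (Function.update x i a)
      = StagedTree.prefixProb y' σ k (Function.update x i a) :=
    hadapted.prefixProb_eq_of_prod_eq hsum hsum' heq hk _
  have hstep := hprefix (k := i + 1) i.isLt
  rw [StagedTree.prefixProb_succ, StagedTree.prefixProb_succ, hprefix i.isLt.le] at hstep
  have hpos := StagedTree.prefixProb_pos (fun i x a => (hy' i x a).1) i (Function.update x i a)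
  have hcancel := mul_right_cancel₀ hpos.ne' hstep
  rwa [hadapted.apply_update_of_le le_rfl, Function.update_self] at hcancel

/-- Identifiability of the staged tree parametrization: if two parameter
assignments `y, y'` (values in `(0,1)`, summing to one over each used stage) give
the same atomic probabilities `∏ i, y i (σ i x) (x i)` for every atom `x`, then
they agree on every stage containing a vertex. Here `σ i x ∈ S` is the stage of
the depth-`i` vertex given by the prefix of `x`, depending only on coordinates
`j < i`. -/
theorem staged_tree_parameters_identifiable
    (p : ℕ) (X : Fin p → Type) [∀ i, Fintype (X i)] [∀ i, Nonempty (X i)]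
    (S : Type)
    (σ : (i : Fin p) → (∀ j, X j) → S)
    (hσ : ∀ (i : Fin p) (x x' : ∀ j, X j),
      (∀ j : Fin p, j < i → x j = x' j) → σ i x = σ i x')
    (y y' : (i : Fin p) → S → X i → ℝ)
    (hy : ∀ (i : Fin p) (x : ∀ j, X j) (a : X i), y i (σ i x) a ∈ Set.Ioo (0:ℝ) 1)
    (hy' : ∀ (i : Fin p) (x : ∀ j, X j) (a : X i), y' i (σ i x) a ∈ Set.Ioo (0:ℝ) 1)
    (hsum : ∀ (i : Fin p) (x : ∀ j, X j), ∑ a : X i, y i (σ i x) a = 1)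
    (hsum' : ∀ (i : Fin p) (x : ∀ j, X j), ∑ a : X i, y' i (σ i x) a = 1)
    (heq : ∀ x : ∀ j, X j,
      ∏ i : Fin p, y i (σ i x) (x i) = ∏ i : Fin p, y' i (σ i x) (x i)) :
    ∀ (i : Fin p) (x : ∀ j, X j) (a : X i), y i (σ i x) a = y' i (σ i x) a :=
  staged_tree_parameters_identifiable_general p X S σ hσ y y' hy' hsum hsum' heq
end

section
/- The inclusion of naive Bayes models in naive staged tree models is strict: for binary C, X₁, X₂ there exists a strictly positive distribution P whose depth-wise conditional distributions each take at most 2 values (so P is a naive staged tree model), but which does not satisfy X₁ ⫫ X₂ | C, hence P is not a naive Bayes model. -/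
open Finset

/-- The inclusion of naive Bayes models in naive staged tree models is strict:
for binary `C, X₁, X₂` there is a strictly positive joint distribution whose
depth-2 conditionals `P(x₂ | c, x₁)` take at most two distinct values over the
four prefixes `(c, x₁)` (so it is a naive staged tree model), yet `P(x₂ | c, x₁)`
depends on `x₁` for some class `c`, so `X₁ ⫫ X₂ | C` fails and `P` is not a
naive Bayes model. -/
theorem naive_staged_tree_strictly_larger_than_naive_bayes :
    ∃ P : Bool → Bool → Bool → ℝ,
      (∀ c x1 x2, 0 < P c x1 x2) ∧
      (∑ c, ∑ x1, ∑ x2, P c x1 x2 = 1) ∧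
      -- at most 2 distinct depth-2 conditional distributions
      Set.ncard {f : Bool → ℝ | ∃ c x1, f = fun x2 =>
          P c x1 x2 / (∑ x2', P c x1 x2')} ≤ 2 ∧
      -- the conditional of X₂ given (c, x₁) depends on x₁: no naive Bayes model
      (∃ c x1 x1' x2,
        P c x1 x2 / (∑ x2', P c x1 x2') ≠ P c x1' x2 / (∑ x2', P c x1' x2')) := by
  refine ⟨fun _ x1 x2 => if x1 = x2 then (1/12 : ℝ) else 2/12, ?_, ?_, ?_, ?_⟩
  · intro c x1 x2; by_cases h : x1 = x2 <;> simp [h]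
  · simp [Fintype.sum_bool]; norm_num
  · have key : ∀ c x1 : Bool,
        (fun x2 => (if x1 = x2 then (1/12 : ℝ) else 2/12) /
          (∑ x2', if x1 = x2' then (1/12 : ℝ) else 2/12)) =
        (fun x2 => if x1 = x2 then (1/3 : ℝ) else 2/3) := by
      intro c x1
      funext x2
      cases x1 <;> cases x2 <;> simp [Fintype.sum_bool] <;> norm_num
    have hsub : {f : Bool → ℝ | ∃ (c : Bool) (x1 : Bool), f = fun x2 =>
          (if x1 = x2 then (1/12 : ℝ) else 2/12) /
          (∑ x2', if x1 = x2' then (1/12 : ℝ) else 2/12)} ⊆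
        {(fun x2 => if true = x2 then (1/3 : ℝ) else 2/3),
         (fun x2 => if false = x2 then (1/3 : ℝ) else 2/3)} := by
      rintro f ⟨c, x1, rfl⟩
      rw [key c x1]
      cases x1
      · right; rfl
      · left; rfl
    calc Set.ncard _ ≤ Set.ncard {(fun x2 => if true = x2 then (1/3 : ℝ) else 2/3),
         (fun x2 => if false = x2 then (1/3 : ℝ) else 2/3)} :=
          Set.ncard_le_ncard hsub ((Set.finite_singleton _).insert _)
      _ ≤ 2 := (Set.ncard_insert_le _ _).trans (by simp)
  · refine ⟨true, true, false, true, ?_⟩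
    simp [Fintype.sum_bool]
    norm_num
end
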